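/- Fix a free ultrafilter 𝒰 on ℕ, t ∈ [0,1], and θ = 2^t. Let ν_ω : 𝒫(ℕ) → ℝ be the function such that for every A ⊆ ℕ, the sequence n ↦ |A ∩ [1, ⌊θ·2ⁿ⌋]|/(θ·2ⁿ) converges to ν_ω(A) along 𝒰, and for each m ∈ ℕ let ν_{ω,m} : 𝒫(ℕ) → ℝ be the function such that the sequence n ↦ |A ∩ (⌊θ·2^{n−m−1}⌋, ⌊θ·2^{n−m}⌋]| / (θ·2^{n−m−1}) converges to ν_{ω,m}(A) along 𝒰. Then for every A ⊆ ℕ, ν_ω(A) = Σ_{m=0}^{∞} 2^{−(m+1)} ν_{ω,m}(A). -/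

import Mathlib

open Filter Topology

/-- The `n`-th approximant of the density measure `ν_ω` for `θ = 2^t`:
`|A ∩ [1, ⌊θ·2ⁿ⌋]| / (θ·2ⁿ)`. -/
noncomputable def mainDensity (t : ℝ) (A : Set ℕ) (n : ℕ) : ℝ :=
  (A ∩ Set.Icc 1 ⌊(2 : ℝ) ^ t * 2 ^ n⌋₊).ncard / ((2 : ℝ) ^ t * 2 ^ n)

/-- The `n`-th approximant of the auxiliary charge `ν_{ω,m}` for `θ = 2^t`:
`|A ∩ (⌊θ·2^{n-m-1}⌋, ⌊θ·2^{n-m}⌋]| / (θ·2^{n-m-1})`. -/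
noncomputable def auxDensity (t : ℝ) (m : ℕ) (A : Set ℕ) (n : ℕ) : ℝ :=
  (A ∩ Set.Ioc ⌊(2 : ℝ) ^ t * 2 ^ ((n : ℝ) - m - 1)⌋₊
      ⌊(2 : ℝ) ^ t * 2 ^ ((n : ℝ) - m)⌋₊).ncard /
    ((2 : ℝ) ^ t * 2 ^ ((n : ℝ) - m - 1))

/-!
Write `θ = 2^t` and `b k = ⌊θ·2^{n-k}⌋`, a decreasing sequence starting at `⌊θ·2ⁿ⌋`. Splitting
`[1, b 0]` into the blocks `(b (m+1), b m]` for `m < M` and the remainder `[1, b M]` gives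
`mainDensity = Σ_{m<M} auxDensity_m / 2^{m+1} + tail_M` with `0 ≤ tail_M ≤ 2^{-M}`, uniformly in `n`.
Passing to the limit along `𝒰` squeezes the partial sums of `Σ_m ν_{ω,m}(A)/2^{m+1}` between
`ν_ω(A) - 2^{-M}` and `ν_ω(A)`; since the terms are nonnegative, the series sums to `ν_ω(A)`.
-/

theorem hasSum_of_tendsto_of_sum_range_le {ι : Type*} {l : Filter ι} [l.NeBot] {x : ι → ℝ}
    {y : ℕ → ι → ℝ} {c : ℕ → ℝ} {ε : ℕ → ℝ} {L : ℝ}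
    (hx : Tendsto x l (𝓝 L)) (hy : ∀ m, Tendsto (y m) l (𝓝 (c m)))
    (hy0 : ∀ m i, 0 ≤ y m i) (hε : Tendsto ε atTop (𝓝 0))
    (hlow : ∀ M i, ∑ m ∈ Finset.range M, y m i ≤ x i)
    (hup : ∀ M i, x i ≤ ∑ m ∈ Finset.range M, y m i + ε M) :
    HasSum c L := by
  have hc0 : ∀ m, 0 ≤ c m := fun m => ge_of_tendsto' (hy m) (hy0 m)
  have hsum : ∀ M, Tendsto (fun i => ∑ m ∈ Finset.range M, y m i) l
      (𝓝 (∑ m ∈ Finset.range M, c m)) := fun M => tendsto_finsetSum _ fun m _ => hy m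
  have hcL : ∀ M, ∑ m ∈ Finset.range M, c m ≤ L := fun M =>
    le_of_tendsto_of_tendsto' (hsum M) hx (hlow M)
  have hLc : ∀ M, L - ε M ≤ ∑ m ∈ Finset.range M, c m := fun M => by
    have := le_of_tendsto_of_tendsto' hx ((hsum M).add_const (ε M)) (hup M)
    linarith
  rw [hasSum_iff_tendsto_nat_of_nonneg hc0]
  refine tendsto_of_tendsto_of_tendsto_of_le_of_le ?_ tendsto_const_nhds hLc hcL
  simpa using tendsto_const_nhds.sub hε

theorem ncard_inter_Icc_one_eq_add (A : Set ℕ) {a c : ℕ} (h : a ≤ c) :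
    (A ∩ Set.Icc 1 c).ncard = (A ∩ Set.Icc 1 a).ncard + (A ∩ Set.Ioc a c).ncard := by
  have hsplit : Set.Icc 1 c = Set.Icc 1 a ∪ Set.Ioc a c := by
    ext x; simp only [Set.mem_Icc, Set.mem_union, Set.mem_Ioc]; omega
  rw [hsplit, Set.inter_union_distrib_left, Set.ncard_union_eq]
  rw [Set.disjoint_left]
  rintro x ⟨-, h1⟩ ⟨-, h2⟩
  simp only [Set.mem_Icc, Set.mem_Ioc] at h1 h2
  omega

theorem ncard_inter_Icc_one_eq_sum_add (A : Set ℕ) {b : ℕ → ℕ} (hb : Antitone b) (M : ℕ) :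
    (A ∩ Set.Icc 1 (b 0)).ncard
      = ∑ m ∈ Finset.range M, (A ∩ Set.Ioc (b (m + 1)) (b m)).ncard
        + (A ∩ Set.Icc 1 (b M)).ncard := by
  induction M with
  | zero => simp
  | succ M ih =>
    rw [Finset.sum_range_succ, ih, add_assoc,
      ncard_inter_Icc_one_eq_add A (hb (Nat.le_succ M)), add_comm (Set.ncard _)]

theorem ncard_inter_Icc_one_floor_le (A : Set ℕ) {x : ℝ} (hx : 0 ≤ x) :
    ((A ∩ Set.Icc 1 ⌊x⌋₊).ncard : ℝ) ≤ x := by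
  have hcard : (A ∩ Set.Icc 1 ⌊x⌋₊).ncard ≤ ⌊x⌋₊ := by
    calc (A ∩ Set.Icc 1 ⌊x⌋₊).ncard ≤ (Set.Icc 1 ⌊x⌋₊).ncard :=
          Set.ncard_le_ncard Set.inter_subset_right (Set.finite_Icc _ _)
      _ = ⌊x⌋₊ := by rw [Set.ncard_eq_toFinset_card', Set.toFinset_Icc, Nat.card_Icc]; omega
  exact (Nat.cast_le.mpr hcard).trans (Nat.floor_le hx)

/-- What remains of `mainDensity t A n` after removing the first `M` auxiliary blocks. -/
noncomputable def tailDensity (t : ℝ) (A : Set ℕ) (M n : ℕ) : ℝ :=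
  (A ∩ Set.Icc 1 ⌊(2 : ℝ) ^ t * 2 ^ ((n : ℝ) - M)⌋₊).ncard / ((2 : ℝ) ^ t * 2 ^ n)

theorem auxDensity_nonneg (t : ℝ) (m : ℕ) (A : Set ℕ) (n : ℕ) : 0 ≤ auxDensity t m A n := by
  unfold auxDensity; positivity

theorem tailDensity_nonneg (t : ℝ) (A : Set ℕ) (M n : ℕ) : 0 ≤ tailDensity t A M n := by
  unfold tailDensity; positivity

theorem tailDensity_le (t : ℝ) (A : Set ℕ) (M n : ℕ) : tailDensity t A M n ≤ (1 / 2) ^ M := by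
  have hθ : (0 : ℝ) < 2 ^ t := Real.rpow_pos_of_pos two_pos t
  have hratio : (2 : ℝ) ^ t * 2 ^ ((n : ℝ) - M) / (2 ^ t * 2 ^ n) = (1 / 2) ^ M := by
    rw [← Real.rpow_natCast 2 n, mul_div_mul_left _ _ hθ.ne', ← Real.rpow_sub two_pos,
      sub_sub_cancel_left, Real.rpow_neg zero_le_two, Real.rpow_natCast, one_div, inv_pow]
  rw [tailDensity, ← hratio]
  gcongr
  exact ncard_inter_Icc_one_floor_le A (by positivity)

theorem mainDensity_eq_sum_auxDensity_add_tailDensity (t : ℝ) (A : Set ℕ) (M n : ℕ) :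
    mainDensity t A n
      = ∑ m ∈ Finset.range M, auxDensity t m A n / 2 ^ (m + 1) + tailDensity t A M n := by
  set b : ℕ → ℕ := fun k => ⌊(2 : ℝ) ^ t * 2 ^ ((n : ℝ) - k)⌋₊ with hb_def
  have hb : Antitone b := fun j k hjk => by
    simp only [hb_def]
    gcongr
    exact one_le_two
  have hscale : ∀ m : ℕ,
      (2 : ℝ) ^ t * 2 ^ ((n : ℝ) - m - 1) * 2 ^ (m + 1) = 2 ^ t * 2 ^ n := fun m => by
    rw [mul_assoc, ← Real.rpow_natCast 2 (m + 1), ← Real.rpow_add two_pos,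
      ← Real.rpow_natCast 2 n]
    push_cast
    ring_nf
  have hb0 : ⌊(2 : ℝ) ^ t * 2 ^ n⌋₊ = b 0 := by simp [hb_def, Real.rpow_natCast]
  have hb_succ : ∀ m : ℕ, b (m + 1) = ⌊(2 : ℝ) ^ t * 2 ^ ((n : ℝ) - m - 1)⌋₊ := fun m => by
    simp only [hb_def]; push_cast; ring_nf
  rw [mainDensity, hb0, ncard_inter_Icc_one_eq_sum_add A hb M]
  push_cast
  rw [add_div, Finset.sum_div]
  refine congrArg₂ (· + ·) (Finset.sum_congr rfl fun m _ => ?_) rfl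
  rw [auxDensity, div_div, hscale, hb_succ]

theorem mainCharge_eq_tsum_auxCharges_general
    (𝒰 : Ultrafilter ℕ)
    (t : ℝ)
    (ν : Set ℕ → ℝ)
    (hν : ∀ A : Set ℕ, Tendsto (mainDensity t A) (𝒰 : Filter ℕ) (𝓝 (ν A)))
    (νa : ℕ → Set ℕ → ℝ)
    (hνa : ∀ (m : ℕ) (A : Set ℕ),
      Tendsto (auxDensity t m A) (𝒰 : Filter ℕ) (𝓝 (νa m A))) :
    ∀ A : Set ℕ, ν A = ∑' m : ℕ, νa m A / 2 ^ (m + 1) := by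
  intro A
  refine (hasSum_of_tendsto_of_sum_range_le (hν A) (fun m => (hνa m A).div_const _)
    (fun m n => div_nonneg (auxDensity_nonneg t m A n) (by positivity))
    (tendsto_pow_atTop_nhds_zero_of_lt_one (r := (1 / 2 : ℝ)) (by norm_num) (by norm_num))
    (fun M n => ?_) (fun M n => ?_)).tsum_eq.symm
  · rw [mainDensity_eq_sum_auxDensity_add_tailDensity t A M n]
    exact le_add_of_nonneg_right (tailDensity_nonneg t A M n)
  · rw [mainDensity_eq_sum_auxDensity_add_tailDensity t A M n]
    exact add_le_add_right (tailDensity_le t A M n) _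

/-- Decomposition of the density measure `ν_ω` as the weighted countable sum
`ν_ω = Σ_m 2^{-(m+1)} ν_{ω,m}` of the auxiliary charges. -/
theorem mainCharge_eq_tsum_auxCharges
    (𝒰 : Ultrafilter ℕ) (hfree : (𝒰 : Filter ℕ) ≤ Filter.cofinite)
    (t : ℝ) (ht : t ∈ Set.Icc (0 : ℝ) 1)
    (ν : Set ℕ → ℝ)
    (hν : ∀ A : Set ℕ, Tendsto (mainDensity t A) (𝒰 : Filter ℕ) (𝓝 (ν A)))
    (νa : ℕ → Set ℕ → ℝ)
    (hνa : ∀ (m : ℕ) (A : Set ℕ),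
      Tendsto (auxDensity t m A) (𝒰 : Filter ℕ) (𝓝 (νa m A))) :
    ∀ A : Set ℕ, ν A = ∑' m : ℕ, νa m A / 2 ^ (m + 1) :=
  mainCharge_eq_tsum_auxCharges_general 𝒰 t ν hν νa hνa
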